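/- Given real numbers r > 0 and t₁, t₂, t₃ all nonzero with t₁ ≠ t₂, define for each unit vector ℓ = (ℓ₁,ℓ₂,ℓ₃) ∈ ℝ³ the quantity ℓ′² = t₁²ℓ₁² + t₂²ℓ₂² + t₃²ℓ₃² and λ_M(ℓ) = r²ℓ₃² + (1/2)[r² + ℓ′² + √((r² − ℓ′²)² + 4r²t₃²ℓ₃²)]. Then the maximum of λ_M over the unit sphere is attained at some unit vector ℓ with ℓ₁ = 0 or ℓ₂ = 0 or ℓ₃ = 0; equivalently, sup over the unit sphere of λ_M equals the sup of λ_M over unit vectors having at least one zero coordinate. -/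
import Mathlib


open Matrix

/-- The function `λ_M(ℓ) = r²ℓ₃² + (1/2)[r² + ℓ′² + √((r² − ℓ′²)² + 4r²t₃²ℓ₃²)]`,
where `ℓ′² = t₁²ℓ₁² + t₂²ℓ₂² + t₃²ℓ₃²`, arising in the two-sided optimization for a
two-qubit X state with Bloch vectors `(0,0,±r)` and correlation matrix
`diag(t₁,t₂,t₃)`. -/
noncomputable def lamM (r t₁ t₂ t₃ : ℝ) (ℓ : Fin 3 → ℝ) : ℝ :=
  r ^ 2 * ℓ 2 ^ 2 + (1 / 2) *
    (r ^ 2 + (t₁ ^ 2 * ℓ 0 ^ 2 + t₂ ^ 2 * ℓ 1 ^ 2 + t₃ ^ 2 * ℓ 2 ^ 2) +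
      Real.sqrt ((r ^ 2 - (t₁ ^ 2 * ℓ 0 ^ 2 + t₂ ^ 2 * ℓ 1 ^ 2 + t₃ ^ 2 * ℓ 2 ^ 2)) ^ 2 +
        4 * r ^ 2 * t₃ ^ 2 * ℓ 2 ^ 2))

lemma sqrt_term_mono (r2 c s s' : ℝ) (hc : 0 ≤ c) (hss : s ≤ s') :
    s + Real.sqrt ((r2 - s) ^ 2 + c) ≤ s' + Real.sqrt ((r2 - s') ^ 2 + c) := by
  have hA' : (0:ℝ) ≤ (r2 - s') ^ 2 + c := by positivity
  have h1 : r2 - s' ≤ Real.sqrt ((r2 - s') ^ 2 + c) := by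
    calc r2 - s' ≤ |r2 - s'| := le_abs_self _
    _ = Real.sqrt ((r2 - s') ^ 2) := (Real.sqrt_sq_eq_abs _).symm
    _ ≤ _ := Real.sqrt_le_sqrt (by linarith)
  have h0 : 0 ≤ Real.sqrt ((r2 - s') ^ 2 + c) := Real.sqrt_nonneg _
  have key : Real.sqrt ((r2 - s) ^ 2 + c) ≤ Real.sqrt ((r2 - s') ^ 2 + c) + (s' - s) := by
    have h2 : (r2 - s) ^ 2 + c ≤ (Real.sqrt ((r2 - s') ^ 2 + c) + (s' - s)) ^ 2 := by
      have := Real.sq_sqrt hA'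
      nlinarith [mul_nonneg (sub_nonneg.2 hss) (sub_nonneg.2 h1)]
    calc Real.sqrt ((r2 - s) ^ 2 + c) ≤ Real.sqrt ((Real.sqrt ((r2 - s') ^ 2 + c) + (s' - s)) ^ 2) :=
          Real.sqrt_le_sqrt h2
      _ = Real.sqrt ((r2 - s') ^ 2 + c) + (s' - s) := Real.sqrt_sq (by linarith)
  linarith

lemma lamM_cont (r t₁ t₂ t₃ : ℝ) : Continuous (lamM r t₁ t₂ t₃) := by
  unfold lamM
  fun_prop

lemma helper (r t₁ t₂ t₃ : ℝ) (hab : t₂ ^ 2 ≤ t₁ ^ 2) :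
    ∃ ℓ : Fin 3 → ℝ, ℓ ⬝ᵥ ℓ = 1 ∧ ℓ 1 = 0 ∧
      ∀ m : Fin 3 → ℝ, m ⬝ᵥ m = 1 → lamM r t₁ t₂ t₃ m ≤ lamM r t₁ t₂ t₃ ℓ := by
  set K : Set (Fin 3 → ℝ) := {ℓ | ℓ ⬝ᵥ ℓ = 1 ∧ ℓ 1 = 0} with hK
  have hne : K.Nonempty := ⟨![1, 0, 0], by constructor <;> simp [dotProduct, Fin.sum_univ_three]⟩
  have hclosed : IsClosed K := by
    have : K = (fun ℓ : Fin 3 → ℝ => ℓ ⬝ᵥ ℓ) ⁻¹' {1} ∩ (fun ℓ : Fin 3 → ℝ => ℓ 1) ⁻¹' {0} := by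
      ext ℓ; simp [hK]
    rw [this]
    refine IsClosed.inter (IsClosed.preimage ?_ isClosed_singleton)
      (IsClosed.preimage (continuous_apply 1) isClosed_singleton)
    simp only [dotProduct]
    fun_prop
  have hbdd : Bornology.IsBounded K := by
    apply Bornology.IsBounded.subset (Metric.isBounded_closedBall (x := (0 : Fin 3 → ℝ)) (r := 1))
    intro ℓ hℓ
    have h1 : ℓ 0 ^ 2 + ℓ 1 ^ 2 + ℓ 2 ^ 2 = 1 := by
      have := hℓ.1; simpa [dotProduct, Fin.sum_univ_three, sq] using this
    simp only [Metric.mem_closedBall, dist_zero_right]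
    rw [pi_norm_le_iff_of_nonneg zero_le_one]
    intro i
    have h2 : ℓ i ^ 2 ≤ 1 := by
      fin_cases i
      · show ℓ 0 ^ 2 ≤ 1; nlinarith [sq_nonneg (ℓ 1), sq_nonneg (ℓ 2)]
      · show ℓ 1 ^ 2 ≤ 1; nlinarith [sq_nonneg (ℓ 0), sq_nonneg (ℓ 2)]
      · show ℓ 2 ^ 2 ≤ 1; nlinarith [sq_nonneg (ℓ 0), sq_nonneg (ℓ 1)]
    rw [Real.norm_eq_abs, ← Real.sqrt_one, ← Real.sqrt_sq_eq_abs]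
    exact Real.sqrt_le_sqrt (by linarith)
  have hcpt : IsCompact K := Metric.isCompact_of_isClosed_isBounded hclosed hbdd
  obtain ⟨ℓ, hℓK, hmax⟩ := hcpt.exists_isMaxOn hne ((lamM_cont r t₁ t₂ t₃).continuousOn)
  refine ⟨ℓ, hℓK.1, hℓK.2, ?_⟩
  intro m hm
  have hm' : m 0 ^ 2 + m 1 ^ 2 + m 2 ^ 2 = 1 := by
    simpa [dotProduct, Fin.sum_univ_three, sq] using hm
  set u := Real.sqrt (m 0 ^ 2 + m 1 ^ 2) with hu
  have hu2 : u ^ 2 = m 0 ^ 2 + m 1 ^ 2 := Real.sq_sqrt (by positivity)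
  set m' : Fin 3 → ℝ := ![u, 0, m 2] with hm'def
  have hm'K : m' ∈ K := by
    constructor
    · simp only [hm'def, dotProduct, Fin.sum_univ_three]
      simp [Matrix.cons_val_zero, Matrix.cons_val_one, ← sq]
      nlinarith
    · simp [hm'def]
  have step1 : lamM r t₁ t₂ t₃ m ≤ lamM r t₁ t₂ t₃ m' := by
    have hmm' : m' 0 = u ∧ m' 1 = 0 ∧ m' 2 = m 2 := by
      refine ⟨rfl, rfl, rfl⟩
    unfold lamM
    rw [hmm'.1, hmm'.2.1, hmm'.2.2]
    have hs : t₁ ^ 2 * m 0 ^ 2 + t₂ ^ 2 * m 1 ^ 2 + t₃ ^ 2 * m 2 ^ 2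
        ≤ t₁ ^ 2 * u ^ 2 + t₂ ^ 2 * 0 ^ 2 + t₃ ^ 2 * m 2 ^ 2 := by
      rw [hu2]; nlinarith [sq_nonneg (m 1)]
    have := sqrt_term_mono (r ^ 2) (4 * r ^ 2 * t₃ ^ 2 * m 2 ^ 2)
      (t₁ ^ 2 * m 0 ^ 2 + t₂ ^ 2 * m 1 ^ 2 + t₃ ^ 2 * m 2 ^ 2)
      (t₁ ^ 2 * u ^ 2 + t₂ ^ 2 * 0 ^ 2 + t₃ ^ 2 * m 2 ^ 2) (by positivity) hs
    clear_value u m'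
    ring_nf at this ⊢
    linarith
  exact step1.trans (hmax hm'K)

/-- Paper's Lemma 2: if `t₁ ≠ t₂` (all `tᵢ` nonzero, `r > 0`), the maximum of
`λ_M` over the unit sphere is attained at some unit vector with at least one zero
coordinate. -/
theorem stmt_12 (r t₁ t₂ t₃ : ℝ) (hr : 0 < r)
    (h1 : t₁ ≠ 0) (h2 : t₂ ≠ 0) (h3 : t₃ ≠ 0) (h12 : t₁ ≠ t₂) :
    ∃ ℓ : Fin 3 → ℝ, ℓ ⬝ᵥ ℓ = 1 ∧ (ℓ 0 = 0 ∨ ℓ 1 = 0 ∨ ℓ 2 = 0) ∧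
      ∀ m : Fin 3 → ℝ, m ⬝ᵥ m = 1 → lamM r t₁ t₂ t₃ m ≤ lamM r t₁ t₂ t₃ ℓ := by
  rcases le_total (t₂ ^ 2) (t₁ ^ 2) with h | h
  · obtain ⟨ℓ, h1', h2', h3'⟩ := helper r t₁ t₂ t₃ h
    exact ⟨ℓ, h1', Or.inr (Or.inl h2'), h3'⟩
  · obtain ⟨ℓ, h1', h2', h3'⟩ := helper r t₂ t₁ t₃ h
    set ℓ' : Fin 3 → ℝ := ![ℓ 1, ℓ 0, ℓ 2] with hℓ'
    have hswap : ∀ v : Fin 3 → ℝ, lamM r t₁ t₂ t₃ ![v 1, v 0, v 2] = lamM r t₂ t₁ t₃ v := by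
      intro v; unfold lamM; simp; ring_nf
    refine ⟨ℓ', ?_, Or.inl (by simp [hℓ', h2']), ?_⟩
    · have := h1'
      simp only [dotProduct, Fin.sum_univ_three] at this ⊢
      simp [hℓ']; linarith
    · intro m hm
      have e1 : lamM r t₁ t₂ t₃ ℓ' = lamM r t₂ t₁ t₃ ℓ := hswap ℓ
      have e2 : lamM r t₁ t₂ t₃ m = lamM r t₂ t₁ t₃ ![m 1, m 0, m 2] := by
        have := hswap ![m 1, m 0, m 2]
        simp at this
        rw [← this]
        congr 1
        ext i; fin_cases i <;> rfl
      rw [e1, e2]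
      apply h3'
      simp only [dotProduct, Fin.sum_univ_three] at hm ⊢
      simp; linarith
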